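/- arXiv:2601.19464 — 5 statements merged into one kernel-verified Lean document; each statement's English description precedes it below -/
import Mathlib

section
/- If ∫_ℝ |g(k)| dk ≤ 2π · exp(α), then for every t ≥ 0 and all x, p ∈ ℝ the (real) value f(t,x,p) is nonnegative: f(t,x,p) ≥ 0. -/
open MeasureTheory

/-- Relativistic energy `ε(p) = √(m² + p²)`. -/
noncomputable def eps (m p : ℝ) : ℝ := Real.sqrt (m ^ 2 + p ^ 2)

/-- The distribution function
`f(t,x,p) = exp(α − β ε(p)) + (1/2π) ∫ g(k) exp(−β ε(p) − i β 𝔇 k p + i k x − 𝔇 k² t) dk`. -/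
noncomputable def fdist (m β D α : ℝ) (g : ℝ → ℂ) (t x p : ℝ) : ℂ :=
  Complex.exp (↑(α - β * eps m p)) +
    (2 * Real.pi)⁻¹ * ∫ k : ℝ, g k * Complex.exp (-(↑(β * eps m p))
      - Complex.I * ↑(β * D * k * p) + Complex.I * ↑(k * x) - ↑(D * k ^ 2 * t))

/-!
The oscillating factors `exp(−iβ𝔇kp + ikx)` have modulus one and the heat factor `exp(−𝔇k²t)`
is at most one, so the integral term has modulus at most `exp(−βε(p)) ∫ |g| / 2π ≤ exp(α − βε(p))`,
which is the equilibrium term. The integral is real because the Hermitian symmetry of `g` makes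
the integrand at `−k` the complex conjugate of the integrand at `k`.
-/

open ComplexConjugate

theorem im_integral_eq_zero_of_conj_neg {G : Type*} [MeasurableSpace G] [AddGroup G]
    [MeasurableNeg G] {μ : Measure G} [μ.IsNegInvariant] {F : G → ℂ}
    (hF : ∀ k, conj (F (-k)) = F k) : (∫ k, F k ∂μ).im = 0 := by
  rw [← Complex.conj_eq_iff_im, ← integral_conj, ← integral_neg_eq_self]
  simp only [hF]

theorem re_nonneg_of_norm_le {a s : ℝ} (hs : 0 < s) {z : ℂ} (hz : ‖z‖ ≤ s * a) :
    0 ≤ ((a : ℂ) + s⁻¹ * z).re := by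
  have hre : |z.re| ≤ s * a := (Complex.abs_re_le_norm z).trans hz
  have hscaled : s⁻¹ * |z.re| ≤ a := by rwa [inv_mul_le_iff₀ hs]
  rw [Complex.add_re, Complex.ofReal_re, Complex.re_ofReal_mul]
  nlinarith [neg_abs_le z.re, inv_pos.mpr hs]

noncomputable def fdistIntegrand (m β D : ℝ) (g : ℝ → ℂ) (t x p k : ℝ) : ℂ :=
  g k * Complex.exp (-(↑(β * eps m p)) - Complex.I * ↑(β * D * k * p) + Complex.I * ↑(k * x)
    - ↑(D * k ^ 2 * t))

theorem fdist_eq (m β D α : ℝ) (g : ℝ → ℂ) (t x p : ℝ) :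
    fdist m β D α g t x p = ↑(Real.exp (α - β * eps m p)) +
      (2 * Real.pi)⁻¹ * ∫ k, fdistIntegrand m β D g t x p k := by
  rw [Complex.ofReal_exp]
  rfl

theorem conj_fdistIntegrand_neg (m β D : ℝ) {g : ℝ → ℂ} (hg : ∀ k, g (-k) = conj (g k))
    (t x p k : ℝ) : conj (fdistIntegrand m β D g t x p (-k)) = fdistIntegrand m β D g t x p k := by
  simp only [fdistIntegrand, map_mul, hg, Complex.conj_conj, ← Complex.exp_conj, map_sub, map_add,
    map_neg, Complex.conj_ofReal, Complex.conj_I]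
  push_cast
  congr 2
  ring

theorem norm_fdistIntegrand_le (m β : ℝ) {D t : ℝ} (hD : 0 ≤ D) (ht : 0 ≤ t) (g : ℝ → ℂ)
    (x p k : ℝ) : ‖fdistIntegrand m β D g t x p k‖ ≤ ‖g k‖ * Real.exp (-(β * eps m p)) := by
  have hre : (-(↑(β * eps m p) : ℂ) - Complex.I * ↑(β * D * k * p) + Complex.I * ↑(k * x)
      - ↑(D * k ^ 2 * t)).re = -(β * eps m p) - D * k ^ 2 * t := by
    simp only [Complex.sub_re, Complex.add_re, Complex.neg_re, Complex.ofReal_re,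
      Complex.I_mul_re, Complex.ofReal_im, neg_zero, sub_zero, add_zero]
  rw [fdistIntegrand, norm_mul, Complex.norm_exp, hre]
  gcongr
  have : 0 ≤ D * k ^ 2 * t := by positivity
  linarith

theorem fdist_nonneg_general (m β D α : ℝ) (hD : 0 < D)
    (g : SchwartzMap ℝ ℂ) (hg : ∀ k : ℝ, g (-k) = (starRingEnd ℂ) (g k))
    (hL1 : (∫ k : ℝ, ‖g k‖) ≤ 2 * Real.pi * Real.exp α)
    (t x p : ℝ) (ht : 0 ≤ t) :
    0 ≤ (fdist m β D α (⇑g) t x p).re ∧ (fdist m β D α (⇑g) t x p).im = 0 := by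
  set c := β * eps m p
  have hbound : ‖∫ k, fdistIntegrand m β D g t x p k‖ ≤ 2 * Real.pi * Real.exp (α - c) :=
    calc ‖∫ k, fdistIntegrand m β D g t x p k‖ ≤ ∫ k, ‖g k‖ * Real.exp (-c) :=
          norm_integral_le_of_norm_le (g.integrable.norm.mul_const _)
            (.of_forall (norm_fdistIntegrand_le m β hD.le ht g x p))
      _ = (∫ k, ‖g k‖) * Real.exp (-c) := integral_mul_const _ _
      _ ≤ 2 * Real.pi * Real.exp α * Real.exp (-c) := by gcongr
      _ = 2 * Real.pi * Real.exp (α - c) := by rw [mul_assoc, ← Real.exp_add, sub_eq_add_neg]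
  have him := im_integral_eq_zero_of_conj_neg (μ := volume) (conj_fdistIntegrand_neg m β D hg t x p)
  rw [fdist_eq]
  exact ⟨re_nonneg_of_norm_le Real.two_pi_pos hbound, by
    simp only [Complex.add_im, Complex.ofReal_im, Complex.im_ofReal_mul, him, mul_zero, add_zero]⟩

/-- if `∫ |g(k)| dk ≤ 2π exp(α)`, then for every `t ≥ 0` and all `x, p` the
(real) value `f(t,x,p)` is nonnegative. -/
theorem fdist_nonneg (m β D α : ℝ) (hm : 0 < m) (hβ : 0 < β) (hD : 0 < D)
    (g : SchwartzMap ℝ ℂ) (hg : ∀ k : ℝ, g (-k) = (starRingEnd ℂ) (g k))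
    (hL1 : (∫ k : ℝ, ‖g k‖) ≤ 2 * Real.pi * Real.exp α)
    (t x p : ℝ) (ht : 0 ≤ t) :
    0 ≤ (fdist m β D α (⇑g) t x p).re ∧ (fdist m β D α (⇑g) t x p).im = 0 :=
  fdist_nonneg_general m β D α hD g hg hL1 t x p ht
end

section
/- Define the kernel K(k) = ∫_ℝ exp(−β ε(p) − i β 𝔇 k p) dp / (2π) for k ∈ ℝ. Then K(k) is real for every k, and for every t ≥ 0 and x ∈ ℝ the particle density n(t,x) = ∫_ℝ f(t,x,p) dp / (2π) satisfies n(t,x) = exp(α) · K(0) + ∫_ℝ g(k) · K(k) · exp(i k x − 𝔇 k² t) dk / (2π). In particular, at t = 0 the density equals the inverse Fourier transform of g(k) · K(k) shifted by the constant exp(α) · K(0). -/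
open MeasureTheory

/-- The particle density `n(t,x) = ∫ f(t,x,p) dp / (2π)`. -/
noncomputable def ndens (m β D α : ℝ) (g : ℝ → ℂ) (t x : ℝ) : ℂ :=
  (2 * Real.pi)⁻¹ * ∫ p : ℝ, fdist m β D α g t x p

/-- The density kernel `K(k) = ∫ exp(−β ε(p) − i β 𝔇 k p) dp / (2π)`. -/
noncomputable def densKernel (m β D : ℝ) (k : ℝ) : ℂ :=
  (2 * Real.pi)⁻¹ *
    ∫ p : ℝ, Complex.exp (-(↑(β * eps m p)) - Complex.I * ↑(β * D * k * p))

/-!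
The integrand of `K` at `-p` is the complex conjugate of its integrand at `p`, so `K` is real.
For the density, the double integral over `(p, k)` is dominated by `e^{-β ε(p)} |g(k)|`, which is
integrable on `ℝ²` because `ε(p) ≥ |p|`; Fubini then lets the `p`-integral be done first, and it
produces `2π K(k)` times the diffusion mode `e^{ikx - 𝔇k²t}`.
-/

open Complex (I)
open ComplexConjugate

lemma integrable_of_even_of_integrableOn_Ioi {E : Type*} [NormedAddCommGroup E] {f : ℝ → E}
    (heven : ∀ x, f (-x) = f x) (hf : IntegrableOn f (Set.Ioi 0)) : Integrable f := by
  rw [← integrableOn_univ, ← Set.Iio_union_Ici (a := (0 : ℝ)), integrableOn_union,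
    integrableOn_Ici_iff_integrableOn_Ioi]
  refine ⟨?_, hf⟩
  rw [← (Measure.measurePreserving_neg (volume : Measure ℝ)).integrableOn_comp_preimage
      (Homeomorph.neg ℝ).measurableEmbedding]
  simpa only [Function.comp_def, Set.neg_preimage, Set.neg_Iio, neg_zero, heven] using hf

lemma integral_im_eq_zero_of_conj_neg {f : ℝ → ℂ} (hf : ∀ x, f (-x) = conj (f x)) :
    (∫ x, f x).im = 0 := by
  refine Complex.conj_eq_iff_im.mp ?_
  rw [← integral_conj, ← integral_neg_eq_self]
  simp only [hf, Complex.conj_conj]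

@[simp] lemma eps_neg (m p : ℝ) : eps m (-p) = eps m p := by simp [eps]

lemma abs_le_eps (m p : ℝ) : |p| ≤ eps m p :=
  Real.abs_le_sqrt (by nlinarith [sq_nonneg m])

@[fun_prop] lemma continuous_eps (m : ℝ) : Continuous (eps m) := by
  unfold eps; fun_prop

lemma integrable_exp_neg_mul_eps (m : ℝ) {β : ℝ} (hβ : 0 < β) :
    Integrable fun p => Real.exp (-(β * eps m p)) := by
  refine integrable_of_even_of_integrableOn_Ioi (by simp) ?_
  refine (exp_neg_integrableOn_Ioi 0 hβ).mono' (by fun_prop) ?_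
  filter_upwards [ae_restrict_mem measurableSet_Ioi] with p (hp : 0 < p)
  rw [Real.norm_of_nonneg (Real.exp_pos _).le, Real.exp_le_exp, neg_mul, neg_le_neg_iff]
  exact mul_le_mul_of_nonneg_left ((le_abs_self p).trans (abs_le_eps m p)) hβ.le

noncomputable def kernelIntegrand (m β D k p : ℝ) : ℂ :=
  Complex.exp (-(↑(β * eps m p)) - I * ↑(β * D * k * p))

noncomputable def diffusionMode (D t x k : ℝ) : ℂ :=
  Complex.exp (I * ↑(k * x) - ↑(D * k ^ 2 * t))

lemma norm_diffusionMode_le {D t : ℝ} (hD : 0 ≤ D) (ht : 0 ≤ t) (x k : ℝ) :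
    ‖diffusionMode D t x k‖ ≤ 1 := by
  rw [diffusionMode, Complex.norm_exp, Real.exp_le_one_iff]
  simp only [Complex.sub_re, Complex.mul_re, Complex.I_re, Complex.I_im, Complex.ofReal_re,
    Complex.ofReal_im]
  nlinarith [mul_nonneg (mul_nonneg hD (sq_nonneg k)) ht]

section Kernel

variable (m β D : ℝ)

lemma densKernel_eq (k : ℝ) :
    densKernel m β D k = (2 * Real.pi)⁻¹ * ∫ p, kernelIntegrand m β D k p := rfl

lemma kernelIntegrand_neg (k p : ℝ) :
    kernelIntegrand m β D k (-p) = conj (kernelIntegrand m β D k p) := by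
  rw [kernelIntegrand, kernelIntegrand, ← Complex.exp_conj]
  congr 1
  simp

lemma densKernel_im (k : ℝ) : (densKernel m β D k).im = 0 := by
  rw [densKernel_eq, Complex.im_ofReal_mul,
    integral_im_eq_zero_of_conj_neg (kernelIntegrand_neg m β D k), mul_zero]

lemma norm_kernelIntegrand (k p : ℝ) :
    ‖kernelIntegrand m β D k p‖ = Real.exp (-(β * eps m p)) := by
  simp [kernelIntegrand, Complex.norm_exp]

lemma integrable_kernelIntegrand {β : ℝ} (hβ : 0 < β) (k : ℝ) :
    Integrable (kernelIntegrand m β D k) := by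
  refine (integrable_norm_iff (Continuous.aestronglyMeasurable ?_)).mp ?_
  · unfold kernelIntegrand
    fun_prop
  · simpa only [norm_kernelIntegrand] using integrable_exp_neg_mul_eps m hβ

lemma exp_sub_mul_eps (α p : ℝ) :
    Complex.exp ↑(α - β * eps m p) = Complex.exp ↑α * kernelIntegrand m β D 0 p := by
  rw [kernelIntegrand, ← Complex.exp_add]
  push_cast
  ring_nf

lemma exp_fdist_exponent_eq (t x k p : ℝ) :
    Complex.exp (-(↑(β * eps m p)) - I * ↑(β * D * k * p) + I * ↑(k * x) - ↑(D * k ^ 2 * t)) =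
      kernelIntegrand m β D k p * diffusionMode D t x k := by
  rw [kernelIntegrand, diffusionMode, ← Complex.exp_add]
  ring_nf

end Kernel

section Density

variable (m : ℝ) {β D t : ℝ} (x : ℝ) {g : ℝ → ℂ}

lemma integrable_fdist_integrand (hβ : 0 < β) (hD : 0 ≤ D) (ht : 0 ≤ t) (hg : Integrable g) :
    Integrable (Function.uncurry fun p k =>
      g k * (kernelIntegrand m β D k p * diffusionMode D t x k)) (volume.prod volume) := by
  refine ((integrable_exp_neg_mul_eps m hβ).mul_prod hg.norm).mono' ?_ (ae_of_all _ fun q => ?_)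
  · refine hg.aestronglyMeasurable.comp_snd.mul (Continuous.aestronglyMeasurable ?_)
    unfold kernelIntegrand diffusionMode
    fun_prop
  · rw [Function.uncurry_apply_pair, norm_mul, norm_mul, norm_kernelIntegrand, mul_comm]
    gcongr
    exact mul_le_of_le_one_right (Real.exp_pos _).le (norm_diffusionMode_le hD ht x q.2)

lemma integral_fdist (hβ : 0 < β) (hD : 0 ≤ D) (ht : 0 ≤ t) (hg : Integrable g) (α : ℝ) :
    ∫ p, fdist m β D α g t x p =
      Complex.exp ↑α * (∫ p, kernelIntegrand m β D 0 p) +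
        (2 * Real.pi)⁻¹ *
          ∫ k, g k * (∫ p, kernelIntegrand m β D k p) * diffusionMode D t x k := by
  have hF := integrable_fdist_integrand m x hβ hD ht hg
  have hF' : Integrable fun p =>
      ∫ k, g k * (kernelIntegrand m β D k p * diffusionMode D t x k) :=
    hF.integral_prod_left
  simp only [fdist, exp_sub_mul_eps m β D α, exp_fdist_exponent_eq]
  rw [integral_add ((integrable_kernelIntegrand m D hβ 0).const_mul _) (hF'.const_mul _),
    integral_const_mul, integral_const_mul, integral_integral_swap hF]
  congr 3 with k
  symm
  rw [mul_right_comm, ← integral_const_mul]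
  congr 1 with p
  ring

end Density

theorem ndens_kernel_representation_general (m β D α : ℝ) (hβ : 0 < β) (hD : 0 < D)
    (g : SchwartzMap ℝ ℂ) :
    (∀ k : ℝ, (densKernel m β D k).im = 0) ∧
    (∀ t : ℝ, 0 ≤ t → ∀ x : ℝ,
      ndens m β D α (⇑g) t x
        = Complex.exp (↑α) * densKernel m β D 0 +
          (2 * Real.pi)⁻¹ * ∫ k : ℝ, g k * densKernel m β D k *
            Complex.exp (Complex.I * ↑(k * x) - ↑(D * k ^ 2 * t))) := by
  refine ⟨densKernel_im m β D, fun t ht x => ?_⟩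
  rw [ndens, integral_fdist m x hβ hD.le ht g.integrable]
  simp only [densKernel_eq, diffusionMode, mul_left_comm (g _), mul_assoc, integral_const_mul]
  ring

/-- the kernel `K(k)` is real for every `k`, and for every `t ≥ 0`, `x ∈ ℝ`
the particle density satisfies
`n(t,x) = exp(α)·K(0) + ∫ g(k)·K(k)·exp(i k x − 𝔇 k² t) dk / (2π)`. -/
theorem ndens_kernel_representation (m β D α : ℝ) (hm : 0 < m) (hβ : 0 < β) (hD : 0 < D)
    (g : SchwartzMap ℝ ℂ) (hg : ∀ k : ℝ, g (-k) = (starRingEnd ℂ) (g k)) :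
    (∀ k : ℝ, (densKernel m β D k).im = 0) ∧
    (∀ t : ℝ, 0 ≤ t → ∀ x : ℝ,
      ndens m β D α (⇑g) t x
        = Complex.exp (↑α) * densKernel m β D 0 +
          (2 * Real.pi)⁻¹ * ∫ k : ℝ, g k * densKernel m β D k *
            Complex.exp (Complex.I * ↑(k * x) - ↑(D * k ^ 2 * t))) :=
  ndens_kernel_representation_general m β D α hβ hD g
end

section
/- Define δf(t,x,p) = f(t,x,p) − exp(α − β ε(p)). If there exists a phase-space point (x₀, p₀) with δf(0, x₀, p₀) ≠ 0, then for every x₁ ∈ ℝ one has δf(0, x₁, p₁) ≠ 0 for p₁ = p₀ + (x₁ − x₀)/(β 𝔇). In particular, the initial perturbation δf(0,·,·) cannot have compact spatial support: if it is not identically zero, then for every x ∈ ℝ there exists p ∈ ℝ with δf(0,x,p) ≠ 0. -/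
open MeasureTheory

/-- The perturbation `δf(t,x,p) = f(t,x,p) − exp(α − β ε(p))`. -/
noncomputable def deltaf (m β D α : ℝ) (g : ℝ → ℂ) (t x p : ℝ) : ℂ :=
  fdist m β D α g t x p - Complex.exp (↑(α - β * eps m p))

lemma deltaf_eq (m β D α : ℝ) (g : ℝ → ℂ) (x p : ℝ) :
    deltaf m β D α g 0 x p =
      (2 * Real.pi)⁻¹ * Complex.exp (-(↑(β * eps m p) : ℂ)) *
        ∫ k : ℝ, g k * Complex.exp (Complex.I * ↑(k * (x - β * D * p))) := by
  unfold deltaf fdist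
  have h : ∀ k : ℝ, (-(↑(β * eps m p)) - Complex.I * ↑(β * D * k * p)
      + Complex.I * ↑(k * x) - ↑(D * k ^ 2 * (0:ℝ)) : ℂ)
      = -(↑(β * eps m p)) + Complex.I * ↑(k * (x - β * D * p)) := by
    intro k; push_cast; ring
  have h2 : (∫ k : ℝ, g k * Complex.exp (-(↑(β * eps m p))
      - Complex.I * ↑(β * D * k * p) + Complex.I * ↑(k * x) - ↑(D * k ^ 2 * (0:ℝ))))
      = Complex.exp (-(↑(β * eps m p) : ℂ)) *
        ∫ k : ℝ, g k * Complex.exp (Complex.I * ↑(k * (x - β * D * p))) := by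
    rw [← integral_const_mul]
    congr 1; ext k
    rw [h k, Complex.exp_add]; ring
  rw [h2]; ring

/-- if `δf(0,x₀,p₀) ≠ 0` at some phase-space point, then for every `x₁` one
has `δf(0,x₁,p₁) ≠ 0` with `p₁ = p₀ + (x₁ − x₀)/(β𝔇)`; in particular a nontrivial initial
perturbation cannot have compact spatial support: for every `x` there is `p` with
`δf(0,x,p) ≠ 0`. -/
theorem deltaf_no_compact_support (m β D α : ℝ) (hm : 0 < m) (hβ : 0 < β) (hD : 0 < D)
    (g : SchwartzMap ℝ ℂ) (hg : ∀ k : ℝ, g (-k) = (starRingEnd ℂ) (g k)) :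
    (∀ x₀ p₀ : ℝ, deltaf m β D α (⇑g) 0 x₀ p₀ ≠ 0 →
      ∀ x₁ : ℝ, deltaf m β D α (⇑g) 0 x₁ (p₀ + (x₁ - x₀) / (β * D)) ≠ 0) ∧
    ((∃ x₀ p₀ : ℝ, deltaf m β D α (⇑g) 0 x₀ p₀ ≠ 0) →
      ∀ x : ℝ, ∃ p : ℝ, deltaf m β D α (⇑g) 0 x p ≠ 0) := by
  have hβD : β * D ≠ 0 := by positivity
  have main : ∀ x₀ p₀ : ℝ, deltaf m β D α (⇑g) 0 x₀ p₀ ≠ 0 →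
      ∀ x₁ : ℝ, deltaf m β D α (⇑g) 0 x₁ (p₀ + (x₁ - x₀) / (β * D)) ≠ 0 := by
    intro x₀ p₀ h x₁
    rw [deltaf_eq] at h ⊢
    have harg : x₁ - β * D * (p₀ + (x₁ - x₀) / (β * D)) = x₀ - β * D * p₀ := by
      field_simp; ring
    rw [harg]
    have hI : (∫ k : ℝ, g k * Complex.exp (Complex.I * ↑(k * (x₀ - β * D * p₀)))) ≠ 0 := by
      intro h0; apply h; rw [h0]; ring
    intro h0
    rcases mul_eq_zero.1 h0 with h1 | h1
    · rcases mul_eq_zero.1 h1 with h2 | h2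
      · simp [Real.pi_ne_zero] at h2
      · exact Complex.exp_ne_zero _ h2
    · exact hI h1
  exact ⟨main, fun ⟨x₀, p₀, h⟩ x => ⟨p₀ + (x - x₀) / (β * D), main x₀ p₀ h x⟩⟩
end

section
/- Let α ∈ ℝ, β > 0, 𝔇 > 0, and let δn : ℝ × ℝ → ℝ be a C^∞ function satisfying the diffusion equation ∂_t δn(t,x) = 𝔇 ∂_x² δn(t,x) for all (t,x). Define, for p ≠ 0, f(t,x,p) = exp(α − β|p|) + π β exp(−β|p|) · ( δn(t, x − β𝔇p) − 𝔇² (∂_x² δn)(t, x − β𝔇p) ). Then for all t, x ∈ ℝ and all p ≠ 0, f satisfies the ultrarelativistic Vlasov–Fokker–Planck equation: ∂f/∂t (t,x,p) + sgn(p) · ∂f/∂x (t,x,p) = (1/(β² 𝔇)) · ∂/∂p [ (∂f/∂p)(t,x,p) + β sgn(p) f(t,x,p) ], where sgn(p) = p/|p|. -/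
open MeasureTheory

/-- The massless (ultrarelativistic) kinetic distribution
`f(t,x,p) = e^{α−β|p|} + πβ e^{−β|p|} (δn(t, x−β𝔇p) − 𝔇² (∂_x²δn)(t, x−β𝔇p))`. -/
noncomputable def fUR (α β D : ℝ) (δn : ℝ → ℝ → ℝ) (t x p : ℝ) : ℝ :=
  Real.exp (α - β * |p|) + Real.pi * β * Real.exp (-(β * |p|)) *
    (δn t (x - β * D * p) - D ^ 2 * deriv (deriv (δn t)) (x - β * D * p))

noncomputable def pd1 (G : ℝ × ℝ → ℝ) : ℝ × ℝ → ℝ := fun q => fderiv ℝ G q (1, 0)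
noncomputable def pd2 (G : ℝ × ℝ → ℝ) : ℝ × ℝ → ℝ := fun q => fderiv ℝ G q (0, 1)

lemma pd_smooth {G : ℝ × ℝ → ℝ} (hG : ContDiff ℝ (⊤ : ℕ∞) G) (v : ℝ × ℝ) :
    ContDiff ℝ (⊤ : ℕ∞) (fun q => fderiv ℝ G q v) :=
  (hG.fderiv_right (by simp)).clm_apply contDiff_const

lemma hasDerivAt_pd1 {G : ℝ × ℝ → ℝ} (hG : ContDiff ℝ (⊤ : ℕ∞) G) (t x : ℝ) :
    HasDerivAt (fun s => G (s, x)) (pd1 G (t, x)) t := by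
  have h1 : HasDerivAt (fun s : ℝ => (s, x)) ((1 : ℝ), (0 : ℝ)) t :=
    (hasDerivAt_id t).prodMk (hasDerivAt_const t x)
  exact ((hG.differentiable (by simp) (t, x)).hasFDerivAt).comp_hasDerivAt t h1

lemma hasDerivAt_pd2 {G : ℝ × ℝ → ℝ} (hG : ContDiff ℝ (⊤ : ℕ∞) G) (t x : ℝ) :
    HasDerivAt (fun y => G (t, y)) (pd2 G (t, x)) x := by
  have h1 : HasDerivAt (fun y : ℝ => (t, y)) ((0 : ℝ), (1 : ℝ)) x :=
    (hasDerivAt_const x t).prodMk (hasDerivAt_id x)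
  exact ((hG.differentiable (by simp) (t, x)).hasFDerivAt).comp_hasDerivAt x h1

lemma fderiv_pd_apply {G : ℝ × ℝ → ℝ} (hG : ContDiff ℝ (⊤ : ℕ∞) G) (z v w : ℝ × ℝ) :
    fderiv ℝ (fun q => fderiv ℝ G q v) z w = fderiv ℝ (fderiv ℝ G) z w v := by
  have hc : DifferentiableAt ℝ (fderiv ℝ G) z :=
    ((hG.fderiv_right (m := (⊤ : ℕ∞)) (by simp)).differentiable (by simp)) z
  rw [fderiv_clm_apply hc (differentiableAt_const v)]
  simp

lemma pd_comm {G : ℝ × ℝ → ℝ} (hG : ContDiff ℝ (⊤ : ℕ∞) G) (z : ℝ × ℝ) :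
    fderiv ℝ (pd1 G) z (0, 1) = fderiv ℝ (pd2 G) z (1, 0) := by
  have hsym := second_derivative_symmetric
    (fun y => ((hG.differentiable (by simp)) y).hasFDerivAt)
    (((hG.fderiv_right (m := (⊤ : ℕ∞)) (by simp)).differentiable (by simp) z).hasFDerivAt)
    ((1 : ℝ), (0 : ℝ)) ((0 : ℝ), (1 : ℝ))
  unfold pd1 pd2
  rw [fderiv_pd_apply hG, fderiv_pd_apply hG]
  exact hsym.symm

lemma pd2_const_mul {G : ℝ × ℝ → ℝ} (hG : ContDiff ℝ (⊤ : ℕ∞) G) (c : ℝ) (z : ℝ × ℝ) :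
    pd2 (fun q => c * G q) z = c * pd2 G z := by
  unfold pd2
  rw [fderiv_const_mul (hG.differentiable (by simp) z) c]
  simp

lemma HasDerivAt.congr_d {f : ℝ → ℝ} {f' g' x : ℝ}
    (h : HasDerivAt f f' x) (e : f' = g') : HasDerivAt f g' x := e ▸ h

/-- if `δn` is a smooth solution of the diffusion equation
`∂_t δn = 𝔇 ∂_x² δn`, then `f` as above satisfies the ultrarelativistic
Vlasov–Fokker–Planck equation
`∂_t f + sgn(p) ∂_x f = (1/(β²𝔇)) ∂_p(∂_p f + β sgn(p) f)` for all `t, x` and `p ≠ 0`. -/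
theorem massless_VFP (α β D : ℝ) (hβ : 0 < β) (hD : 0 < D)
    (δn : ℝ → ℝ → ℝ)
    (hsmooth : ContDiff ℝ (⊤ : ℕ∞) (fun q : ℝ × ℝ => δn q.1 q.2))
    (hdiffusion : ∀ t x : ℝ, deriv (fun s : ℝ => δn s x) t
      = D * deriv (deriv (fun y : ℝ => δn t y)) x) :
    ∀ t x p : ℝ, p ≠ 0 →
      deriv (fun s : ℝ => fUR α β D δn s x p) t
        + (p / |p|) * deriv (fun y : ℝ => fUR α β D δn t y p) x
      = (1 / (β ^ 2 * D)) *
          deriv (fun q : ℝ => deriv (fun r : ℝ => fUR α β D δn t x r) q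
            + β * (q / |q|) * fUR α β D δn t x q) p := by
  intro t x p hp
  have h0 : ContDiff ℝ (⊤ : ℕ∞) (fun q : ℝ × ℝ => δn q.1 q.2) := hsmooth
  set uF : ℝ × ℝ → ℝ := fun q => δn q.1 q.2 with huF
  have hs1 : ContDiff ℝ (⊤ : ℕ∞) (pd2 uF) := pd_smooth h0 _
  have hs2 : ContDiff ℝ (⊤ : ℕ∞) (pd2 (pd2 uF)) := pd_smooth hs1 _
  have hs3 : ContDiff ℝ (⊤ : ℕ∞) (pd2 (pd2 (pd2 uF))) := pd_smooth hs2 _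
  have hd1 : ∀ a : ℝ, deriv (δn a) = fun b => pd2 uF (a, b) :=
    fun a => funext fun b => (hasDerivAt_pd2 h0 a b).deriv
  have hd2 : ∀ a b : ℝ, deriv (deriv (δn a)) b = pd2 (pd2 uF) (a, b) := by
    intro a b
    rw [hd1 a]
    exact (hasDerivAt_pd2 hs1 a b).deriv
  have hdiff1 : ∀ z : ℝ × ℝ, pd1 uF z = D * pd2 (pd2 uF) z := by
    intro z
    have h := hdiffusion z.1 z.2
    rw [hd2] at h
    rw [← (hasDerivAt_pd1 h0 z.1 z.2).deriv]
    exact h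
  have hAcomm : pd1 (pd2 uF) = fun z => D * pd2 (pd2 (pd2 uF)) z := by
    funext z
    have h : pd1 (pd2 uF) z = fderiv ℝ (pd1 uF) z (0, 1) := (pd_comm h0 z).symm
    rw [h]
    have heq : pd1 uF = fun q => D * pd2 (pd2 uF) q := funext hdiff1
    rw [heq]
    exact pd2_const_mul hs2 D z
  have hdiff2 : ∀ z : ℝ × ℝ, pd1 (pd2 (pd2 uF)) z = D * pd2 (pd2 (pd2 (pd2 uF))) z := by
    intro z
    have h : pd1 (pd2 (pd2 uF)) z = fderiv ℝ (pd1 (pd2 uF)) z (0, 1) := (pd_comm hs1 z).symm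
    rw [h, hAcomm]
    exact pd2_const_mul hs3 D z
  -- rewrite fUR using pd2
  have hfUR : ∀ a b r : ℝ, fUR α β D δn a b r
      = Real.exp (α - β * |r|) + Real.pi * β * Real.exp (-(β * |r|)) *
        (δn a (b - β * D * r) - D ^ 2 * pd2 (pd2 uF) (a, b - β * D * r)) := by
    intro a b r
    unfold fUR
    rw [hd2]
  -- sign bookkeeping
  set s : ℝ := p / |p| with hsdef
  have habs : |p| = s * p := by
    rw [hsdef, div_mul_eq_mul_div, eq_div_iff (abs_ne_zero.mpr hp), abs_mul_abs_self]
  have hsval : s = 1 ∨ s = -1 := by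
    rcases lt_or_gt_of_ne hp with h | h
    · right; rw [hsdef, abs_of_neg h, div_neg, div_self hp]
    · left; rw [hsdef, abs_of_pos h, div_self hp]
  -- t-derivative
  have ht0 : ∀ b : ℝ, HasDerivAt (fun a => δn a b) (D * pd2 (pd2 uF) (t, b)) t :=
    fun b => (hdiff1 (t, b)) ▸ hasDerivAt_pd1 h0 t b
  have ht2 : ∀ b : ℝ, HasDerivAt (fun a => pd2 (pd2 uF) (a, b))
      (D * pd2 (pd2 (pd2 (pd2 uF))) (t, b)) t :=
    fun b => (hdiff2 (t, b)) ▸ hasDerivAt_pd1 hs2 t b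
  have Ht : HasDerivAt (fun a => fUR α β D δn a x p)
      (Real.pi * β * Real.exp (-(β * |p|)) *
        (D * pd2 (pd2 uF) (t, x - β * D * p)
          - D ^ 2 * (D * pd2 (pd2 (pd2 (pd2 uF))) (t, x - β * D * p)))) t := by
    have hfe : (fun a => fUR α β D δn a x p)
        = fun a => Real.exp (α - β * |p|) + Real.pi * β * Real.exp (-(β * |p|)) *
          (δn a (x - β * D * p) - D ^ 2 * pd2 (pd2 uF) (a, x - β * D * p)) :=
      funext fun a => hfUR a x p
    rw [hfe]
    have h := (hasDerivAt_const t (Real.exp (α - β * |p|))).add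
      (((ht0 (x - β * D * p)).sub ((ht2 (x - β * D * p)).const_mul (D ^ 2))).const_mul
        (Real.pi * β * Real.exp (-(β * |p|))))
    exact h.congr_d (by ring)
  -- x-derivative
  have hshift : HasDerivAt (fun b : ℝ => b - β * D * p) 1 x :=
    (hasDerivAt_id x).sub_const (β * D * p)
  have Hx : HasDerivAt (fun b => fUR α β D δn t b p)
      (Real.pi * β * Real.exp (-(β * |p|)) *
        (pd2 uF (t, x - β * D * p)
          - D ^ 2 * pd2 (pd2 (pd2 uF)) (t, x - β * D * p))) x := by
    have hfe : (fun b => fUR α β D δn t b p)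
        = fun b => Real.exp (α - β * |p|) + Real.pi * β * Real.exp (-(β * |p|)) *
          (δn t (b - β * D * p) - D ^ 2 * pd2 (pd2 uF) (t, b - β * D * p)) :=
      funext fun b => hfUR t b p
    rw [hfe]
    have h1 : HasDerivAt (fun b => δn t (b - β * D * p))
        (pd2 uF (t, x - β * D * p) * 1) x :=
      (hasDerivAt_pd2 h0 t (x - β * D * p)).comp x hshift
    have h2 : HasDerivAt (fun b => pd2 (pd2 uF) (t, b - β * D * p))
        (pd2 (pd2 (pd2 uF)) (t, x - β * D * p) * 1) x :=
      by have := (hasDerivAt_pd2 hs2 t (x - β * D * p)).comp x hshift; exact this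
    have h := (hasDerivAt_const x (Real.exp (α - β * |p|))).add
      ((h1.sub (h2.const_mul (D ^ 2))).const_mul (Real.pi * β * Real.exp (-(β * |p|))))
    exact h.congr_d (by ring)
  -- p-direction: local model functions
  have hlin : ∀ r : ℝ, HasDerivAt (fun r : ℝ => x - β * D * r) (-(β * D)) r := by
    intro r
    have := (hasDerivAt_const r x).sub ((hasDerivAt_id' r).const_mul (β * D))
    exact this.congr_d (by ring)
  have hcomp0 : ∀ r : ℝ, HasDerivAt (fun r : ℝ => δn t (x - β * D * r))
      (pd2 uF (t, x - β * D * r) * -(β * D)) r :=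
    fun r => (hasDerivAt_pd2 h0 t (x - β * D * r)).comp r (hlin r)
  have hcomp1 : ∀ r : ℝ, HasDerivAt (fun r : ℝ => pd2 uF (t, x - β * D * r))
      (pd2 (pd2 uF) (t, x - β * D * r) * -(β * D)) r :=
    fun r => by have := (hasDerivAt_pd2 hs1 t (x - β * D * r)).comp r (hlin r); exact this
  have hcomp2 : ∀ r : ℝ, HasDerivAt (fun r : ℝ => pd2 (pd2 uF) (t, x - β * D * r))
      (pd2 (pd2 (pd2 uF)) (t, x - β * D * r) * -(β * D)) r :=
    fun r => by have := (hasDerivAt_pd2 hs2 t (x - β * D * r)).comp r (hlin r); exact this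
  have hcomp3 : ∀ r : ℝ, HasDerivAt (fun r : ℝ => pd2 (pd2 (pd2 uF)) (t, x - β * D * r))
      (pd2 (pd2 (pd2 (pd2 uF))) (t, x - β * D * r) * -(β * D)) r :=
    fun r => by have := (hasDerivAt_pd2 hs3 t (x - β * D * r)).comp r (hlin r); exact this
  have hexpE : ∀ r : ℝ, HasDerivAt (fun r : ℝ => Real.exp (α - β * (s * r)))
      (Real.exp (α - β * (s * r)) * -(β * s)) r := by
    intro r
    have hin : HasDerivAt (fun r : ℝ => α - β * (s * r)) (-(β * s)) r := by
      have := (hasDerivAt_const r α).sub (((hasDerivAt_id' r).const_mul s).const_mul β)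
      exact this.congr_d (by ring)
    exact hin.exp
  have hexpe : ∀ r : ℝ, HasDerivAt (fun r : ℝ => Real.exp (-(β * (s * r))))
      (Real.exp (-(β * (s * r))) * -(β * s)) r := by
    intro r
    have hin : HasDerivAt (fun r : ℝ => -(β * (s * r))) (-(β * s)) r := by
      have := (((hasDerivAt_id' r).const_mul s).const_mul β).neg
      exact this.congr_d (by ring)
    exact hin.exp
  have hce : ∀ r : ℝ, HasDerivAt (fun r : ℝ => Real.pi * β * Real.exp (-(β * (s * r))))
      (Real.pi * β * (Real.exp (-(β * (s * r))) * -(β * s))) r :=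
    fun r => (hexpe r).const_mul (Real.pi * β)
  have hAd : ∀ r : ℝ, HasDerivAt
      (fun r : ℝ => δn t (x - β * D * r) - D ^ 2 * pd2 (pd2 uF) (t, x - β * D * r))
      ((pd2 uF (t, x - β * D * r)
        - D ^ 2 * pd2 (pd2 (pd2 uF)) (t, x - β * D * r)) * -(β * D)) r :=
    fun r => ((hcomp0 r).sub ((hcomp2 r).const_mul (D ^ 2))).congr_d (by ring)
  have hBd : ∀ r : ℝ, HasDerivAt
      (fun r : ℝ => pd2 uF (t, x - β * D * r)
        - D ^ 2 * pd2 (pd2 (pd2 uF)) (t, x - β * D * r))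
      ((pd2 (pd2 uF) (t, x - β * D * r)
        - D ^ 2 * pd2 (pd2 (pd2 (pd2 uF))) (t, x - β * D * r)) * -(β * D)) r :=
    fun r => ((hcomp1 r).sub ((hcomp3 r).const_mul (D ^ 2))).congr_d (by ring)
  -- the local model F and its derivatives
  set F : ℝ → ℝ := fun r => Real.exp (α - β * (s * r)) + Real.pi * β * Real.exp (-(β * (s * r))) *
    (δn t (x - β * D * r) - D ^ 2 * pd2 (pd2 uF) (t, x - β * D * r)) with hFdef
  set F' : ℝ → ℝ := fun r => Real.exp (α - β * (s * r)) * -(β * s) +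
    (Real.pi * β * (Real.exp (-(β * (s * r))) * -(β * s)) *
      (δn t (x - β * D * r) - D ^ 2 * pd2 (pd2 uF) (t, x - β * D * r)) +
     Real.pi * β * Real.exp (-(β * (s * r))) *
      ((pd2 uF (t, x - β * D * r)
        - D ^ 2 * pd2 (pd2 (pd2 uF)) (t, x - β * D * r)) * -(β * D))) with hF'def
  have hF : ∀ r : ℝ, HasDerivAt F (F' r) r := by
    intro r
    rw [hFdef, hF'def]
    exact (hexpE r).add ((hce r).mul (hAd r))
  set F'' : ℝ → ℝ := fun r => Real.exp (α - β * (s * r)) * -(β * s) * -(β * s) +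
    ((Real.pi * β * (Real.exp (-(β * (s * r))) * -(β * s) * -(β * s)) *
        (δn t (x - β * D * r) - D ^ 2 * pd2 (pd2 uF) (t, x - β * D * r)) +
      Real.pi * β * (Real.exp (-(β * (s * r))) * -(β * s)) *
        ((pd2 uF (t, x - β * D * r)
          - D ^ 2 * pd2 (pd2 (pd2 uF)) (t, x - β * D * r)) * -(β * D))) +
     (Real.pi * β * (Real.exp (-(β * (s * r))) * -(β * s)) *
        ((pd2 uF (t, x - β * D * r)
          - D ^ 2 * pd2 (pd2 (pd2 uF)) (t, x - β * D * r)) * -(β * D)) +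
      Real.pi * β * Real.exp (-(β * (s * r))) *
        ((pd2 (pd2 uF) (t, x - β * D * r)
          - D ^ 2 * pd2 (pd2 (pd2 (pd2 uF))) (t, x - β * D * r)) * -(β * D) * -(β * D)))) with hF''def
  have hF' : ∀ r : ℝ, HasDerivAt F' (F'' r) r := by
    intro r
    rw [hF'def, hF''def]
    have t1 : HasDerivAt (fun r : ℝ => Real.exp (α - β * (s * r)) * -(β * s))
        (Real.exp (α - β * (s * r)) * -(β * s) * -(β * s)) r := (hexpE r).mul_const _
    have t2a : HasDerivAt
        (fun r : ℝ => Real.pi * β * (Real.exp (-(β * (s * r))) * -(β * s)) *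
          (δn t (x - β * D * r) - D ^ 2 * pd2 (pd2 uF) (t, x - β * D * r)))
        (Real.pi * β * (Real.exp (-(β * (s * r))) * -(β * s) * -(β * s)) *
          (δn t (x - β * D * r) - D ^ 2 * pd2 (pd2 uF) (t, x - β * D * r)) +
         Real.pi * β * (Real.exp (-(β * (s * r))) * -(β * s)) *
          ((pd2 uF (t, x - β * D * r)
            - D ^ 2 * pd2 (pd2 (pd2 uF)) (t, x - β * D * r)) * -(β * D))) r := by
      have hu : HasDerivAt (fun r : ℝ => Real.pi * β * (Real.exp (-(β * (s * r))) * -(β * s)))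
          (Real.pi * β * (Real.exp (-(β * (s * r))) * -(β * s) * -(β * s))) r :=
        ((hexpe r).mul_const (-(β * s))).const_mul (Real.pi * β)
      exact hu.mul (hAd r)
    have t2b : HasDerivAt
        (fun r : ℝ => Real.pi * β * Real.exp (-(β * (s * r))) *
          ((pd2 uF (t, x - β * D * r)
            - D ^ 2 * pd2 (pd2 (pd2 uF)) (t, x - β * D * r)) * -(β * D)))
        (Real.pi * β * (Real.exp (-(β * (s * r))) * -(β * s)) *
          ((pd2 uF (t, x - β * D * r)
            - D ^ 2 * pd2 (pd2 (pd2 uF)) (t, x - β * D * r)) * -(β * D)) +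
         Real.pi * β * Real.exp (-(β * (s * r))) *
          ((pd2 (pd2 uF) (t, x - β * D * r)
            - D ^ 2 * pd2 (pd2 (pd2 (pd2 uF))) (t, x - β * D * r)) * -(β * D) * -(β * D))) r := by
      have hv : HasDerivAt
          (fun r : ℝ => (pd2 uF (t, x - β * D * r)
            - D ^ 2 * pd2 (pd2 (pd2 uF)) (t, x - β * D * r)) * -(β * D))
          ((pd2 (pd2 uF) (t, x - β * D * r)
            - D ^ 2 * pd2 (pd2 (pd2 (pd2 uF))) (t, x - β * D * r)) * -(β * D) * -(β * D)) r :=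
        (hBd r).mul_const (-(β * D))
      exact (hce r).mul hv
    exact t1.add (t2a.add t2b)
  -- eventual equality near p
  have hUopen : IsOpen {q : ℝ | 0 < s * q} :=
    isOpen_lt continuous_const (continuous_const.mul continuous_id)
  have hpU : p ∈ {q : ℝ | 0 < s * q} := by
    simp only [Set.mem_setOf_eq, ← habs]
    exact abs_pos.mpr hp
  have hUabs : ∀ q : ℝ, 0 < s * q → |q| = s * q ∧ q / |q| = s := by
    intro q hq
    rcases hsval with h | h <;> rw [h] at hq ⊢
    · rw [one_mul] at hq
      rw [abs_of_pos hq]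
      exact ⟨(one_mul q).symm, div_self (ne_of_gt hq)⟩
    · have hqneg : q < 0 := by nlinarith
      rw [abs_of_neg hqneg]
      constructor
      · ring
      · rw [div_neg, div_self (ne_of_lt hqneg)]
  have hevF : ∀ q : ℝ, 0 < s * q → (fun r : ℝ => fUR α β D δn t x r) =ᶠ[nhds q] F := by
    intro q hq
    filter_upwards [hUopen.mem_nhds hq] with r hr
    rw [hfUR t x r, (hUabs r hr).1, hFdef]
  have hevH : (fun q : ℝ => deriv (fun r : ℝ => fUR α β D δn t x r) q
      + β * (q / |q|) * fUR α β D δn t x q) =ᶠ[nhds p]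
      (fun q : ℝ => F' q + β * s * F q) := by
    filter_upwards [hUopen.mem_nhds hpU] with q hq
    have h1 : deriv (fun r : ℝ => fUR α β D δn t x r) q = F' q := by
      rw [(hevF q hq).deriv_eq, (hF q).deriv]
    have h2 : fUR α β D δn t x q = F q := by
      rw [hfUR t x q, (hUabs q hq).1, hFdef]
    rw [h1, h2, (hUabs q hq).2]
  have Hp : deriv (fun q : ℝ => deriv (fun r : ℝ => fUR α β D δn t x r) q
      + β * (q / |q|) * fUR α β D δn t x q) p = F'' p + β * s * F' p := by
    rw [hevH.deriv_eq]
    exact ((hF' p).add ((hF p).const_mul (β * s))).deriv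
  -- put it all together
  rw [Ht.deriv, Hx.deriv, Hp]
  simp only [hF'def, hF''def]
  rw [habs]
  rcases hsval with h | h <;> rw [h] <;> field_simp <;> ring
end

section
/- Fix β > 0, 𝔇 > 0, m > 0, and set ε(p) = √(m² + p²), v(p) = p/ε(p). Let f : ℝ³ → ℝ be C² in a neighborhood of a point (t₀,x₀,p₀) with f > 0 on that neighborhood, and suppose f satisfies the Vlasov–Fokker–Planck equation ∂_t f + v(p) ∂_x f = (1/(β²𝔇)) ∂_p(∂_p f + β v f) at (t₀,x₀,p₀). Define s(t,x,p) = f(t,x,p) · (β ε(p) + log f(t,x,p) − 1) and λ(t,x,p) = (∂_p f)(t,x,p) + β v(p) f(t,x,p). Then at (t₀,x₀,p₀): ∂_t s + v(p) ∂_x s = (1/(β²𝔇)) · ∂_p[ (β ε(p) + log f) · λ ] − (1/(β²𝔇)) · λ² / f, where ∂_p in the first term on the right is the derivative at p₀ of q ↦ (β ε(q) + log f(t₀,x₀,q)) · λ(t₀,x₀,q). -/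
/-!
Write `ψ = βε + log f` and `λ = ∂_p f + βvf`. Since `∂(f (c + log f - 1)) = (c + log f) ∂f`,
the transport part of `s = f (ψ - 1)` is `ψ (∂_t f + v ∂_x f)`, which by the Vlasov–Fokker–Planck
equation is `(β²𝔇)⁻¹ ψ ∂_p λ`. The key observation is `∂_p ψ = βv + ∂_p f / f = λ / f`, so the
product rule gives `ψ ∂_p λ = ∂_p (ψ λ) - λ² / f`.
-/

open MeasureTheory

/-- Relativistic velocity `v(p) = p/ε(p)`. -/
noncomputable def vel (m p : ℝ) : ℝ := p / eps m p

theorem eps_pos {m : ℝ} (hm : m ≠ 0) (p : ℝ) : 0 < eps m p := Real.sqrt_pos.2 (by positivity)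

theorem hasDerivAt_eps {m : ℝ} (hm : m ≠ 0) (p : ℝ) : HasDerivAt (eps m) (vel m p) p :=
  (((hasDerivAt_pow 2 p).const_add (m ^ 2)).sqrt (by positivity)).congr_deriv <| by
    rw [vel, eps]; field_simp; norm_num

theorem differentiable_vel {m : ℝ} (hm : m ≠ 0) : Differentiable ℝ (vel m) := fun p =>
  differentiableAt_id.div (hasDerivAt_eps hm p).differentiableAt (eps_pos hm p).ne'

theorem HasDerivAt.mul_const_add_log_sub_one {g : ℝ → ℝ} {g' t : ℝ} (c : ℝ)
    (hg : HasDerivAt g g' t) (hgt : g t ≠ 0) :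
    HasDerivAt (fun s => g s * (c + Real.log (g s) - 1)) (g' * (c + Real.log (g t))) t :=
  (hg.fun_mul (((hg.log hgt).const_add c).sub_const 1)).congr_deriv <| by field_simp; ring

theorem hasDerivAt_energy_add_log {m : ℝ} (hm : m ≠ 0) (β : ℝ) {F : ℝ → ℝ} {F' p : ℝ}
    (hF : HasDerivAt F F' p) (hFp : F p ≠ 0) :
    HasDerivAt (fun q => β * eps m q + Real.log (F q)) ((F' + β * vel m p * F p) / F p) p :=
  (((hasDerivAt_eps hm p).const_mul β).fun_add (hF.log hFp)).congr_deriv <| by field_simp; ring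

theorem ContDiffAt.differentiableAt_deriv {𝕜 E : Type*} [NontriviallyNormedField 𝕜]
    [NormedAddCommGroup E] [NormedSpace 𝕜 E] {F : 𝕜 → E} {p : 𝕜} (hF : ContDiffAt 𝕜 2 F p) :
    DifferentiableAt 𝕜 (deriv F) p :=
  (hF.derivWithin (m := 1) (by norm_num)).differentiableAt one_ne_zero

theorem entropy_production_identity_general (m β D : ℝ) (hm : 0 < m)
    (f : ℝ → ℝ → ℝ → ℝ) (t₀ x₀ p₀ : ℝ)
    (U : Set (ℝ × ℝ × ℝ)) (hU : U ∈ nhds (t₀, x₀, p₀))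
    (hC2 : ContDiffOn ℝ 2 (fun q : ℝ × ℝ × ℝ => f q.1 q.2.1 q.2.2) U)
    (hpos : ∀ q ∈ U, 0 < f q.1 q.2.1 q.2.2)
    (hVFP : deriv (fun t : ℝ => f t x₀ p₀) t₀
        + vel m p₀ * deriv (fun x : ℝ => f t₀ x p₀) x₀
      = (1 / (β ^ 2 * D)) *
          deriv (fun q : ℝ => deriv (fun r : ℝ => f t₀ x₀ r) q
            + β * vel m q * f t₀ x₀ q) p₀) :
    deriv (fun t : ℝ => f t x₀ p₀ * (β * eps m p₀ + Real.log (f t x₀ p₀) - 1)) t₀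
      + vel m p₀ *
        deriv (fun x : ℝ => f t₀ x p₀ * (β * eps m p₀ + Real.log (f t₀ x p₀) - 1)) x₀
    = (1 / (β ^ 2 * D)) *
        deriv (fun q : ℝ => (β * eps m q + Real.log (f t₀ x₀ q)) *
          (deriv (fun r : ℝ => f t₀ x₀ r) q + β * vel m q * f t₀ x₀ q)) p₀
      - (1 / (β ^ 2 * D)) *
          (deriv (fun r : ℝ => f t₀ x₀ r) p₀ + β * vel m p₀ * f t₀ x₀ p₀) ^ 2
            / f t₀ x₀ p₀ := by
  have hf : ContDiffAt ℝ 2 (fun q : ℝ × ℝ × ℝ => f q.1 q.2.1 q.2.2) (t₀, x₀, p₀) :=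
    hC2.contDiffAt hU
  have hf₀ : f t₀ x₀ p₀ ≠ 0 := (hpos _ (mem_of_mem_nhds hU)).ne'
  have ht : ContDiffAt ℝ 2 (fun t => f t x₀ p₀) t₀ :=
    hf.comp (f := fun t => (t, x₀, p₀)) _ (by fun_prop)
  have hx : ContDiffAt ℝ 2 (fun x => f t₀ x p₀) x₀ :=
    hf.comp (f := fun x => (t₀, x, p₀)) _ (by fun_prop)
  have hp : ContDiffAt ℝ 2 (fun p => f t₀ x₀ p) p₀ :=
    hf.comp (f := fun p => (t₀, x₀, p)) _ (by fun_prop)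
  have hp' := (hp.differentiableAt two_ne_zero).hasDerivAt
  have hΛ : DifferentiableAt ℝ
      (fun q => deriv (fun r => f t₀ x₀ r) q + β * vel m q * f t₀ x₀ q) p₀ :=
    hp.differentiableAt_deriv.fun_add
      (((differentiable_vel hm.ne' p₀).const_mul β).fun_mul hp'.differentiableAt)
  rw [((ht.differentiableAt two_ne_zero).hasDerivAt.mul_const_add_log_sub_one _ hf₀).deriv,
    ((hx.differentiableAt two_ne_zero).hasDerivAt.mul_const_add_log_sub_one _ hf₀).deriv,
    ((hasDerivAt_energy_add_log hm.ne' β hp' hf₀).fun_mul hΛ.hasDerivAt).deriv]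
  linear_combination (β * eps m p₀ + Real.log (f t₀ x₀ p₀)) * hVFP

/-- the pointwise entropy-production identity. If `f > 0` is `C²` on a
neighborhood of `(t₀,x₀,p₀)` and satisfies the Vlasov–Fokker–Planck equation there, then
with `s = f(βε + log f − 1)` and `λ = ∂_p f + βvf` one has, at `(t₀,x₀,p₀)`,
`∂_t s + v ∂_x s = (β²𝔇)⁻¹ ∂_p[(βε + log f) λ] − (β²𝔇)⁻¹ λ²/f`. -/
theorem entropy_production_identity (m β D : ℝ) (hm : 0 < m) (hβ : 0 < β) (hD : 0 < D)
    (f : ℝ → ℝ → ℝ → ℝ) (t₀ x₀ p₀ : ℝ)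
    (U : Set (ℝ × ℝ × ℝ)) (hU : U ∈ nhds (t₀, x₀, p₀))
    (hC2 : ContDiffOn ℝ 2 (fun q : ℝ × ℝ × ℝ => f q.1 q.2.1 q.2.2) U)
    (hpos : ∀ q ∈ U, 0 < f q.1 q.2.1 q.2.2)
    (hVFP : deriv (fun t : ℝ => f t x₀ p₀) t₀
        + vel m p₀ * deriv (fun x : ℝ => f t₀ x p₀) x₀
      = (1 / (β ^ 2 * D)) *
          deriv (fun q : ℝ => deriv (fun r : ℝ => f t₀ x₀ r) q
            + β * vel m q * f t₀ x₀ q) p₀) :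
    deriv (fun t : ℝ => f t x₀ p₀ * (β * eps m p₀ + Real.log (f t x₀ p₀) - 1)) t₀
      + vel m p₀ *
        deriv (fun x : ℝ => f t₀ x p₀ * (β * eps m p₀ + Real.log (f t₀ x p₀) - 1)) x₀
    = (1 / (β ^ 2 * D)) *
        deriv (fun q : ℝ => (β * eps m q + Real.log (f t₀ x₀ q)) *
          (deriv (fun r : ℝ => f t₀ x₀ r) q + β * vel m q * f t₀ x₀ q)) p₀
      - (1 / (β ^ 2 * D)) *
          (deriv (fun r : ℝ => f t₀ x₀ r) p₀ + β * vel m p₀ * f t₀ x₀ p₀) ^ 2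
            / f t₀ x₀ p₀ :=
  entropy_production_identity_general m β D hm f t₀ x₀ p₀ U hU hC2 hpos hVFP
end
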